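/- arXiv:1907.06187 — 5 statements merged into one kernel-verified Lean document; each statement's English description precedes it below -/
import Mathlib

section
/- Let r, s, t be positive integers with r ≤ s ≤ t. If the complete tripartite graph K_{r,s,t} admits a 5-cycle decomposition, then: (1) r, s, and t all have the same parity; (2) 5 divides rs + rt + st; and (3) t(r + s) ≤ 4rs (i.e. t ≤ 4rs/(r+s)). -/
open SimpleGraph

/-- The complete tripartite graph `K_{a,b,c}`. -/
def completeTripartiteGraph (a b c : ℕ) :
    SimpleGraph (Σ i : Fin 3, Fin (![a, b, c] i)) :=
  completeMultipartiteGraph (fun i : Fin 3 => Fin (![a, b, c] i))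

/-- `G` decomposes into cycles whose lengths lie in `L`: there is a family of
edge sets, each the edge set of a cycle in `G` of length in `L`, which
partitions the edge set of `G`. -/
def HasCycleDecomp {V : Type*} (G : SimpleGraph V) (L : Set ℕ) : Prop :=
  ∃ D : Set (Set (Sym2 V)),
    (∀ E ∈ D, ∃ (v : V) (w : G.Walk v v),
      w.IsCycle ∧ w.length ∈ L ∧ E = {e | e ∈ w.edges}) ∧
    ⋃₀ D = G.edgeSet ∧ D.PairwiseDisjoint id

/-! Each cycle uses an even number (0 or 2) of the edges at any vertex, so all degrees `s + t`,
`r + t`, `r + s` of `K_{r,s,t}` are even, and the `rs + rt + st` edges fall into blocks of five.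
The part of size `t` is independent; if every edge of a closed walk met an independent set, the
walk would alternate between the set and its complement and so have even length. Hence each
5-cycle contains at most four of the `t(r + s)` edges at that part, so
`5 t(r + s) ≤ 4(rs + rt + st)`, which is `t(r + s) ≤ 4rs`. -/

universe u

open Finset

namespace SimpleGraph

variable {V : Type u} {G : SimpleGraph V}

theorem Walk.even_length_iff_of_forall_edges_meet {S : Set V} (hS : G.IsIndepSet S) {u v : V}
    (w : G.Walk u v) (hw : ∀ e ∈ w.edges, ∃ a ∈ S, a ∈ e) :
    Even w.length ↔ (u ∈ S ↔ v ∈ S) := by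
  induction w with
  | nil => simp
  | @cons u x v hadj p ih =>
    simp only [Walk.edges_cons, List.mem_cons, forall_eq_or_imp] at hw
    obtain ⟨⟨a, haS, ha⟩, hw⟩ := hw
    have hux : u ∈ S ↔ x ∉ S := by
      refine ⟨fun hu hx => hS hu hx hadj.ne hadj, fun hx => ?_⟩
      rcases Sym2.mem_iff.mp ha with rfl | rfl
      · exact haS
      · exact absurd haS hx
    rw [Walk.length_cons, Nat.even_add_one, ih hw]
    tauto

theorem Walk.exists_mem_edges_avoiding_of_odd_length {S : Set V} (hS : G.IsIndepSet S) {v : V}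
    (w : G.Walk v v) (hodd : Odd w.length) : ∃ e ∈ w.edges, ∀ a ∈ S, a ∉ e := by
  by_contra! hw
  exact Nat.not_even_iff_odd.mpr hodd ((w.even_length_iff_of_forall_edges_meet hS hw).mpr Iff.rfl)

theorem card_filter_edgeFinset_meet_eq_sum_degree [Fintype V] [DecidableEq V]
    [DecidableRel G.Adj] {S : Finset V} (hS : G.IsIndepSet S) :
    #{e ∈ G.edgeFinset | ∃ a ∈ S, a ∈ e} = ∑ v ∈ S, G.degree v := by
  have hsplit :
      {e ∈ G.edgeFinset | ∃ a ∈ S, a ∈ e} = S.biUnion fun v => G.incidenceFinset v := by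
    ext e
    simp only [mem_filter, mem_edgeFinset, mem_biUnion, mem_incidenceFinset, incidenceSet,
      Set.mem_sep_iff]
    tauto
  rw [hsplit, card_biUnion]
  · simp_rw [card_incidenceFinset_eq_degree]
  · intro u hu v hv huv
    rw [Function.onFun, Finset.disjoint_left]
    intro e heu hev
    rw [mem_incidenceFinset] at heu hev
    have he := (Sym2.mem_and_mem_iff huv).mp ⟨heu.2, hev.2⟩
    exact hS hu hv huv (G.mem_edgeSet.mp (he ▸ heu.1))

theorem isIndepSet_completeMultipartiteGraph_part {ι : Type*} {W : ι → Type*} (i : ι)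
    [Fintype (W i)] :
    (completeMultipartiteGraph W).IsIndepSet
      ↑(univ.map (Function.Embedding.sigmaMk (β := W) i)) := by
  intro u hu v hv _ hadj
  simp only [coe_map, coe_univ, Set.image_univ, Set.mem_range] at hu hv
  obtain ⟨x, rfl⟩ := hu
  obtain ⟨y, rfl⟩ := hv
  exact hadj rfl

end SimpleGraph

open SimpleGraph

section CycleDecomposition

variable {V : Type u} {G : SimpleGraph V} {L : Set ℕ} [Fintype V] [DecidableRel G.Adj]

theorem HasCycleDecomp.exists_card_filter_eq_sum_countP (h : HasCycleDecomp G L) :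
    ∃ (ι : Type u) (_ : Fintype ι) (c : ι → Σ v, G.Walk v v),
      (∀ i, (c i).2.IsCycle ∧ (c i).2.length ∈ L) ∧
      ∀ (p : Sym2 V → Prop) [DecidablePred p],
        #{e ∈ G.edgeFinset | p e} = ∑ i, (c i).2.edges.countP p := by
  classical
  obtain ⟨D, hD, hcover, hdisj⟩ := h
  choose v w hw using hD
  have hmem : ∀ E (hE : E ∈ D) e, e ∈ E ↔ e ∈ (w E hE).edges := fun E hE e =>
    Set.ext_iff.mp (hw E hE).2.2 e
  let : Fintype D := (Set.toFinite D).fintype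
  refine ⟨D, inferInstance, fun E => ⟨v E E.2, w E E.2⟩,
    fun E => ⟨(hw E E.2).1, (hw E E.2).2.1⟩, fun p _ => ?_⟩
  have hsplit : {e ∈ G.edgeFinset | p e}
      = univ.biUnion fun E : D => ((w E E.2).edges.filter p).toFinset := by
    ext e
    simp only [mem_filter, mem_edgeFinset, ← hcover, Set.mem_sUnion, mem_biUnion, mem_univ,
      true_and, List.mem_toFinset, List.mem_filter, decide_eq_true_eq, Subtype.exists]
    constructor
    · rintro ⟨⟨E, hE, he⟩, hp⟩
      exact ⟨E, hE, (hmem E hE e).mp he, hp⟩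
    · rintro ⟨E, hE, he, hp⟩
      exact ⟨⟨E, hE, (hmem E hE e).mpr he⟩, hp⟩
  rw [hsplit, card_biUnion]
  · refine sum_congr rfl fun E _ => ?_
    rw [List.toFinset_card_of_nodup ((hw E E.2).1.edges_nodup.filter _),
      List.countP_eq_length_filter]
  · intro E _ F _ hEF
    rw [Function.onFun, Finset.disjoint_left]
    intro e heE heF
    simp only [List.mem_toFinset, List.mem_filter] at heE heF
    exact Set.disjoint_left.mp (hdisj E.2 F.2 (Subtype.coe_ne_coe.mpr hEF))
      ((hmem E E.2 e).mpr heE.1) ((hmem F F.2 e).mpr heF.1)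

theorem HasCycleDecomp.even_degree (h : HasCycleDecomp G L) (x : V) : Even (G.degree x) := by
  classical
  obtain ⟨ι, _, c, hc, hcount⟩ := h.exists_card_filter_eq_sum_countP
  rw [← card_incidenceFinset_eq_degree, incidenceFinset_eq_filter, hcount]
  exact even_sum _ fun i _ =>
    ((hc i).1.isTrail.even_countP_edges_iff x).mpr fun hne => (hne rfl).elim

theorem HasCycleDecomp.dvd_card_edgeFinset {k : ℕ} (h : HasCycleDecomp G {k}) :
    k ∣ #G.edgeFinset := by
  obtain ⟨ι, _, c, hc, hcount⟩ := h.exists_card_filter_eq_sum_countP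
  have hcard := hcount fun _ => True
  simp only [filter_true, decide_true, List.countP_true, Walk.length_edges] at hcard
  rw [hcard]
  exact dvd_sum fun i _ => ((hc i).2 : _ = k) ▸ dvd_rfl

theorem HasCycleDecomp.mul_card_filter_meet_le [DecidableEq V] {k : ℕ}
    (h : HasCycleDecomp G {k}) (hk : Odd k) {S : Finset V} (hS : G.IsIndepSet S) :
    k * #{e ∈ G.edgeFinset | ∃ a ∈ S, a ∈ e} ≤ (k - 1) * #G.edgeFinset := by
  obtain ⟨ι, _, c, hc, hcount⟩ := h.exists_card_filter_eq_sum_countP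
  have hcard := hcount fun _ => True
  simp only [filter_true, decide_true, List.countP_true, Walk.length_edges] at hcard
  rw [hcount, hcard, mul_sum, mul_sum]
  refine sum_le_sum fun i _ => ?_
  have hlen : (c i).2.length = k := (hc i).2
  obtain ⟨e, he, hout⟩ := (c i).2.exists_mem_edges_avoiding_of_odd_length hS (hlen ▸ hk)
  have hlt : (c i).2.edges.countP (fun e => ∃ a ∈ S, a ∈ e) < k := by
    rw [← hlen, ← Walk.length_edges, List.countP_lt_length_iff]
    exact ⟨e, he, by simpa using hout⟩
  rw [hlen, mul_comm]
  exact Nat.mul_le_mul_right k (Nat.le_sub_one_of_lt hlt)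

end CycleDecomposition

instance (a b c : ℕ) : DecidableRel (completeTripartiteGraph a b c).Adj :=
  inferInstanceAs (DecidableRel (completeMultipartiteGraph _).Adj)

theorem degree_completeTripartiteGraph (a b c : ℕ) (v : Σ i : Fin 3, Fin (![a, b, c] i)) :
    (completeTripartiteGraph a b c).degree v = ![b + c, a + c, a + b] v.1 := by
  have hnbr : (completeTripartiteGraph a b c).neighborFinset v
      = (univ.filter (· ≠ v.1)).sigma fun _ => univ := by
    ext w
    rw [mem_neighborFinset]
    simp [completeTripartiteGraph, ne_comm]
  rw [← card_neighborFinset_eq_degree, hnbr, card_sigma, sum_filter, Fin.sum_univ_three]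
  simp only [card_univ, Fintype.card_fin]
  obtain ⟨i, x⟩ := v
  fin_cases i <;> simp

theorem card_edgeFinset_completeTripartiteGraph (a b c : ℕ) :
    #(completeTripartiteGraph a b c).edgeFinset = a * b + a * c + b * c := by
  have hsum := (completeTripartiteGraph a b c).sum_degrees_eq_twice_card_edges
  simp only [degree_completeTripartiteGraph, Fintype.sum_sigma, sum_const, card_univ,
    Fintype.card_fin, smul_eq_mul, Fin.sum_univ_three, Matrix.cons_val_zero, Matrix.cons_val_one,
    Matrix.cons_val] at hsum
  linarith

theorem stmt_3_general (r s t : ℕ) (hr : 0 < r) (hs : 0 < s) (ht : 0 < t)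
    (h : HasCycleDecomp (completeTripartiteGraph r s t) {5}) :
    (r % 2 = s % 2 ∧ s % 2 = t % 2) ∧
      5 ∣ (r * s + r * t + s * t) ∧
      t * (r + s) ≤ 4 * r * s := by
  have hst := h.even_degree ⟨0, ⟨0, hr⟩⟩
  have hrt := h.even_degree ⟨1, ⟨0, hs⟩⟩
  have hrs := h.even_degree ⟨2, ⟨0, ht⟩⟩
  rw [degree_completeTripartiteGraph] at hst hrt hrs
  simp only [Matrix.cons_val_zero, Matrix.cons_val_one, Matrix.cons_val, Nat.even_iff]
    at hst hrt hrs
  have hdvd := h.dvd_card_edgeFinset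
  rw [card_edgeFinset_completeTripartiteGraph] at hdvd
  have hpart : (completeTripartiteGraph r s t).IsIndepSet
      ↑(univ.map (Function.Embedding.sigmaMk (β := fun i => Fin (![r, s, t] i)) 2)) :=
    isIndepSet_completeMultipartiteGraph_part 2
  have hbound := h.mul_card_filter_meet_le (by decide) hpart
  rw [card_filter_edgeFinset_meet_eq_sum_degree hpart, sum_map,
    card_edgeFinset_completeTripartiteGraph] at hbound
  simp only [Function.Embedding.sigmaMk_apply, degree_completeTripartiteGraph, sum_const,
    card_univ, Fintype.card_fin, smul_eq_mul] at hbound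
  simp only [Matrix.cons_val, Nat.add_one_sub_one] at hbound
  exact ⟨by omega, hdvd, by nlinarith⟩

theorem stmt_3 (r s t : ℕ) (hr : 0 < r) (hs : 0 < s) (ht : 0 < t)
    (hrs : r ≤ s) (hst : s ≤ t)
    (h : HasCycleDecomp (completeTripartiteGraph r s t) {5}) :
    (r % 2 = s % 2 ∧ s % 2 = t % 2) ∧
      5 ∣ (r * s + r * t + s * t) ∧
      t * (r + s) ≤ 4 * r * s :=
  stmt_3_general r s t hr hs ht h
end

section
/- The complete tripartite graph K_{5,5,5} admits a 5-cycle decomposition. -/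
/-!
Label the vertices of `K_{5,5,5}` by `(i, a) ∈ ℤ/3 × ℤ/5` and let `ℤ/3 × ℤ/5` act by translation,
an action by automorphisms. Along the base cycle `(0,0) (1,1) (0,1) (1,3) (2,1)` every edge joins
some `(i, a)` to some `(i + 1, b)`, and the differences `b - a` of its five edges are `1, 0, 2, 3, 4`,
each residue exactly once. Hence each edge of `K_{5,5,5}` lies in exactly one of the 15 translates of
the base cycle: the translate is fixed by the part `i` and the offset `a` of the base edge with the
right difference.
-/

open SimpleGraph

theorem hasCycleDecomp_of_cycles {ι V : Type*} {G : SimpleGraph V} {L : Set ℕ}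
    {u : ι → V} (c : ∀ i, G.Walk (u i) (u i)) (hcycle : ∀ i, (c i).IsCycle)
    (hlength : ∀ i, (c i).length ∈ L) (hcover : ∀ ⦃x y⦄, G.Adj x y → ∃ i, s(x, y) ∈ (c i).edges)
    (hdisjoint : ∀ i j, i ≠ j → ∀ e ∈ (c i).edges, e ∉ (c j).edges) :
    HasCycleDecomp G L := by
  refine ⟨Set.range fun i => {e | e ∈ (c i).edges}, ?_, ?_, ?_⟩
  · rintro _ ⟨i, rfl⟩
    exact ⟨u i, c i, hcycle i, hlength i, rfl⟩
  · refine subset_antisymm ?_ fun e he => ?_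
    · rintro e ⟨_, ⟨i, rfl⟩, he⟩
      exact (c i).edges_subset_edgeSet he
    · induction e using Sym2.ind with
      | _ x y =>
        obtain ⟨i, hi⟩ := hcover he
        exact ⟨_, ⟨i, rfl⟩, hi⟩
  · rintro _ ⟨i, rfl⟩ _ ⟨j, rfl⟩ hne
    exact Set.disjoint_left.2 (hdisjoint i j fun h => hne (h ▸ rfl))

instance inst_s4 (a b c : ℕ) : DecidableRel (completeTripartiteGraph a b c).Adj := fun x y =>
  decidable_of_iff (x.1 ≠ y.1) Iff.rfl

abbrev K555 : SimpleGraph (Σ i : Fin 3, Fin (![5, 5, 5] i)) := completeTripartiteGraph 5 5 5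

namespace K555

def vtx (i : Fin 3) (a : Fin 5) : Σ i : Fin 3, Fin (![5, 5, 5] i) :=
  ⟨i, Fin.cast (by fin_cases i <;> rfl) a⟩

def shift (s : Fin 3) (k : Fin 5) : K555 →g K555 where
  toFun v := vtx (v.1 + s) (Fin.cast (by fin_cases v <;> rfl) v.2 + k)
  map_rel' {v w} hvw := fun h => hvw (by simpa [vtx] using h)

theorem shift_injective (s : Fin 3) (k : Fin 5) : Function.Injective (shift s k) := by
  revert s k
  decide

def baseCycle : K555.Walk (vtx 0 0) (vtx 0 0) :=
  .cons (v := vtx 1 1) (by decide) <| .cons (v := vtx 0 1) (by decide) <|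
  .cons (v := vtx 1 3) (by decide) <| .cons (v := vtx 2 1) (by decide) <| .cons (by decide) .nil

theorem baseCycle_isCycle : baseCycle.IsCycle := by
  rw [baseCycle, Walk.cons_isCycle_iff, Walk.isPath_def]
  decide

def pentagon (p : Fin 3 × Fin 5) :
    K555.Walk (shift p.1 p.2 (vtx 0 0)) (shift p.1 p.2 (vtx 0 0)) :=
  baseCycle.map (shift p.1 p.2)

theorem pentagon_isCycle (p : Fin 3 × Fin 5) : (pentagon p).IsCycle :=
  baseCycle_isCycle.map (shift_injective p.1 p.2)

set_option maxRecDepth 10000 in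
theorem exists_pentagon_of_adj : ∀ ⦃x y⦄, K555.Adj x y → ∃ p, s(x, y) ∈ (pentagon p).edges := by
  decide

set_option maxRecDepth 10000 in
theorem pentagon_edges_disjoint :
    ∀ p q, p ≠ q → ∀ e ∈ (pentagon p).edges, e ∉ (pentagon q).edges := by
  decide

end K555

theorem stmt_4 : HasCycleDecomp (completeTripartiteGraph 5 5 5) {5} :=
  hasCycleDecomp_of_cycles K555.pentagon K555.pentagon_isCycle (fun _ => rfl)
    K555.exists_pentagon_of_adj K555.pentagon_edges_disjoint
end

section
/- Let B be the simple graph on vertex set (ZMod 5) × (ZMod 5) in which (a, i) is adjacent to (b, j) if and only if b - a ∈ {1, -1} in ZMod 5 (this graph is the 5-blowup B_5(C_5) of the 5-cycle C_5). Then B admits a 5-cycle decomposition. -/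
open SimpleGraph

/-- The 5-blowup of the 5-cycle: `(a, i)` is adjacent to `(b, j)` iff
`b - a ∈ {1, -1}` in `ZMod 5`. -/
def blowupC5 : SimpleGraph (ZMod 5 × ZMod 5) where
  Adj u v := v.1 - u.1 = 1 ∨ v.1 - u.1 = -1
  symm := by
    constructor
    intro u v h
    rcases h with h | h
    · right
      rw [← neg_sub, h]
    · left
      rw [← neg_sub, h, neg_neg]
  loopless := by
    constructor
    intro u h
    simp only [sub_self] at h
    rcases h with h | h <;> exact absurd h (by decide)

/-! The 25 cycles are the graphs `a ↦ (a, i + a * j)` of the affine maps of `ZMod 5`. An edge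
`(a, x) — (a + 1, y)` lies on exactly one of them, the one with slope `j = y - x` and intercept
`i = x - a * j`; it cannot be traversed backwards by another one because `2 ≠ 0` in `ZMod 5`. -/

theorem ZMod.add_one_add_one_ne_self_of_five (a : ZMod 5) : a + 1 + 1 ≠ a := by
  revert a; decide

namespace SimpleGraph

variable {V : Type*} {G : SimpleGraph V}

theorem hasCycleDecomp_of_edges {ι : Type*} {L : Set ℕ} {v : ι → V} (w : ∀ k, G.Walk (v k) (v k))
    (hcycle : ∀ k, (w k).IsCycle) (hlength : ∀ k, (w k).length ∈ L)
    (hcover : ∀ e ∈ G.edgeSet, ∃ k, e ∈ (w k).edges)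
    (hunique : ∀ k l e, e ∈ (w k).edges → e ∈ (w l).edges → k = l) :
    HasCycleDecomp G L := by
  refine ⟨Set.range fun k => {e | e ∈ (w k).edges}, ?_, ?_, ?_⟩
  · rintro _ ⟨k, rfl⟩
    exact ⟨v k, w k, hcycle k, hlength k, rfl⟩
  · refine subset_antisymm ?_ fun e he => ?_
    · rintro e ⟨_, ⟨k, rfl⟩, he⟩
      exact (w k).edges_subset_edgeSet he
    · obtain ⟨k, hk⟩ := hcover e he
      exact ⟨_, ⟨k, rfl⟩, hk⟩
  · rintro _ ⟨k, rfl⟩ _ ⟨l, rfl⟩ hne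
    exact Set.disjoint_left.2 fun e hk hl => hne (by rw [hunique k l e hk hl])

def closedWalkOfZMod5 (f : ZMod 5 → V) (hf : ∀ a, G.Adj (f a) (f (a + 1))) : G.Walk (f 0) (f 0) :=
  .cons (hf 0) <| .cons (hf 1) <| .cons (hf 2) <| .cons (hf 3) <| .cons (hf 4) .nil

variable (f : ZMod 5 → V) (hf : ∀ a, G.Adj (f a) (f (a + 1)))

theorem edges_closedWalkOfZMod5 :
    (closedWalkOfZMod5 f hf).edges = [0, 1, 2, 3, 4].map fun a => s(f a, f (a + 1)) := rfl

theorem mem_edges_closedWalkOfZMod5 {e : Sym2 V} :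
    e ∈ (closedWalkOfZMod5 f hf).edges ↔ ∃ a, e = s(f a, f (a + 1)) := by
  rw [edges_closedWalkOfZMod5, List.mem_map]
  exact ⟨fun ⟨a, _, he⟩ => ⟨a, he.symm⟩,
    fun ⟨a, he⟩ => ⟨a, (by decide : ∀ a : ZMod 5, a ∈ [0, 1, 2, 3, 4]) a, he.symm⟩⟩

theorem isCycle_closedWalkOfZMod5 (hinj : f.Injective) : (closedWalkOfZMod5 f hf).IsCycle := by
  have hedge : Function.Injective fun a => s(f a, f (a + 1)) := by
    intro a b hab
    rcases Sym2.eq_iff.1 hab with ⟨h, -⟩ | ⟨h₁, h₂⟩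
    · exact hinj h
    · exact absurd (hinj h₁ ▸ hinj h₂) (ZMod.add_one_add_one_ne_self_of_five b)
  refine (Walk.isCycle_def _).2 ⟨(Walk.isTrail_def _).2 ?_, nofun, ?_⟩
  · rw [edges_closedWalkOfZMod5]
    exact List.Nodup.map hedge (by decide)
  · change ([1, 2, 3, 4, 0].map f).Nodup
    exact List.Nodup.map hinj (by decide)

end SimpleGraph

def affineLine (i j : ZMod 5) (a : ZMod 5) : ZMod 5 × ZMod 5 := (a, i + a * j)

theorem blowupC5_adj_affineLine (i j a : ZMod 5) :
    blowupC5.Adj (affineLine i j a) (affineLine i j (a + 1)) :=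
  Or.inl (add_sub_cancel_left a 1)

def lineCycle (p : ZMod 5 × ZMod 5) :
    blowupC5.Walk (affineLine p.1 p.2 0) (affineLine p.1 p.2 0) :=
  closedWalkOfZMod5 (affineLine p.1 p.2) (blowupC5_adj_affineLine p.1 p.2)

theorem isCycle_lineCycle (p : ZMod 5 × ZMod 5) : (lineCycle p).IsCycle :=
  isCycle_closedWalkOfZMod5 _ _ fun _ _ h => congrArg Prod.fst h

theorem mem_edges_lineCycle_of_fst_eq_add_one {u v : ZMod 5 × ZMod 5} (h : v.1 = u.1 + 1) :
    s(u, v) ∈ (lineCycle (u.2 - u.1 * (v.2 - u.2), v.2 - u.2)).edges := by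
  refine (mem_edges_closedWalkOfZMod5 _ _).2 ⟨u.1, ?_⟩
  congr 1
  · exact Prod.ext rfl (by simp only [affineLine]; ring)
  · exact Prod.ext h (by simp only [affineLine]; ring)

theorem exists_mem_edges_lineCycle {e : Sym2 (ZMod 5 × ZMod 5)} (he : e ∈ blowupC5.edgeSet) :
    ∃ p, e ∈ (lineCycle p).edges := by
  induction e using Sym2.ind with
  | h u v =>
    rcases he with h | h
    · exact ⟨_, mem_edges_lineCycle_of_fst_eq_add_one (by linear_combination h)⟩
    · rw [Sym2.eq_swap]
      exact ⟨_, mem_edges_lineCycle_of_fst_eq_add_one (by linear_combination -h)⟩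

theorem eq_of_mem_edges_lineCycle {p q : ZMod 5 × ZMod 5} {e : Sym2 (ZMod 5 × ZMod 5)}
    (hp : e ∈ (lineCycle p).edges) (hq : e ∈ (lineCycle q).edges) : p = q := by
  obtain ⟨a, rfl⟩ := (mem_edges_closedWalkOfZMod5 _ _).1 hp
  obtain ⟨b, he⟩ := (mem_edges_closedWalkOfZMod5 _ _).1 hq
  rcases Sym2.eq_iff.1 he with ⟨h₁, h₂⟩ | ⟨h₁, h₂⟩
  · simp only [affineLine, Prod.ext_iff] at h₁ h₂
    obtain ⟨rfl, h₁⟩ := h₁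
    have hj : p.2 = q.2 := by linear_combination h₂.2 - h₁
    exact Prod.ext (by linear_combination h₁ - a * hj) hj
  · simp only [affineLine, Prod.ext_iff] at h₁ h₂
    exact absurd (h₁.1 ▸ h₂.1) (ZMod.add_one_add_one_ne_self_of_five b)

theorem stmt_5 : HasCycleDecomp blowupC5 {5} :=
  hasCycleDecomp_of_edges lineCycle isCycle_lineCycle (fun _ => rfl)
    (fun _ => exists_mem_edges_lineCycle) fun _ _ _ => eq_of_mem_edges_lineCycle
end

section
/- Let r, s, t be positive integers. If the complete tripartite graph K_{r,s,t} admits a decomposition into triangles and 5-cycles, then the complete tripartite graph K_{5r,5s,5t} admits a 5-cycle decomposition. -/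
/-!
Blowing up every vertex of `K_{r,s,t}` into five copies gives `K_{5r,5s,5t}`. In the blow-up
`G × Fin 5` of a graph `G`, the edges lying over different cycles of a cycle decomposition of `G`
are disjoint, so it suffices to decompose the blow-ups of a 3-cycle and of a 5-cycle into
5-cycles and to transport these decompositions along the cycles of `G`. For the 5-cycle on
`Fin 5` the 25 cycles `p ↦ (p, a + b p)` do it; for the triangle, the 15 translates of a single
5-cycle under `Fin 3 × Fin 5`.
-/

open SimpleGraph

open Function

namespace SimpleGraph

variable {V W : Type*} {G : SimpleGraph V} {H : SimpleGraph W} {L : Set ℕ} {α : Type*}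

def HasCycleDecompOn (G : SimpleGraph V) (L : Set ℕ) (E : Set (Sym2 V)) : Prop :=
  ∃ D : Set (Set (Sym2 V)),
    (∀ C ∈ D, ∃ (v : V) (w : G.Walk v v),
      w.IsCycle ∧ w.length ∈ L ∧ C = {e | e ∈ w.edges}) ∧
    ⋃₀ D = E ∧ D.PairwiseDisjoint id

theorem hasCycleDecomp_iff : HasCycleDecomp G L ↔ G.HasCycleDecompOn L G.edgeSet := Iff.rfl

theorem HasCycleDecompOn.iUnion {ι : Type*} {E : ι → Set (Sym2 V)}
    (hE : Pairwise (Disjoint on E)) (h : ∀ i, G.HasCycleDecompOn L (E i)) :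
    G.HasCycleDecompOn L (⋃ i, E i) := by
  choose D hcyc hunion hdisj using h
  refine ⟨⋃ i, D i, ?_, ?_, ?_⟩
  · simp only [Set.mem_iUnion]
    rintro C ⟨i, hC⟩
    exact hcyc i C hC
  · rw [Set.sUnion_iUnion]
    exact Set.iUnion_congr hunion
  · simp only [Set.PairwiseDisjoint, Set.Pairwise, Set.mem_iUnion]
    rintro C ⟨i, hC⟩ C' ⟨j, hC'⟩ hne
    obtain rfl | hij := eq_or_ne i j
    · exact hdisj i hC hC' hne
    · exact (hE hij).mono (hunion i ▸ Set.subset_sUnion_of_mem hC)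
        (hunion j ▸ Set.subset_sUnion_of_mem hC')

theorem HasCycleDecompOn.map {E : Set (Sym2 V)} (h : G.HasCycleDecompOn L E) (φ : Copy G H) :
    H.HasCycleDecompOn L (Sym2.map φ '' E) := by
  obtain ⟨D, hcyc, hunion, hdisj⟩ := h
  refine ⟨Set.image (Sym2.map φ) '' D, ?_, ?_, ?_⟩
  · rintro _ ⟨C, hC, rfl⟩
    obtain ⟨v, p, hp, hlen, rfl⟩ := hcyc C hC
    refine ⟨φ v, p.map φ.toHom, hp.map φ.injective, by rwa [Walk.length_map], ?_⟩
    ext e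
    simp [Walk.edges_map]
  · rw [← hunion, Set.image_sUnion]
  · rintro _ ⟨C, hC, rfl⟩ _ ⟨C', hC', rfl⟩ hne
    exact (Set.disjoint_image_iff (Sym2.map.injective φ.injective)).mpr
      (hdisj hC hC' fun hCC' => hne (hCC' ▸ rfl))

theorem _root_.HasCycleDecomp.of_iso (h : HasCycleDecomp G L) (e : G ≃g H) :
    HasCycleDecomp H L := by
  have himage : Sym2.map e.toCopy '' G.edgeSet = H.edgeSet := by
    rw [← e.symm.toEmbedding.preimage_edgeSet]
    exact congrFun (Set.image_eq_preimage_of_inverse (f := Sym2.map e) (g := Sym2.map e.symm)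
      (fun z => by simp [Sym2.map_map]) (fun z => by simp [Sym2.map_map])) _
  simpa only [hasCycleDecomp_iff, himage] using (hasCycleDecomp_iff.mp h).map e.toCopy

theorem image_edgeSet_cycleGraph {n : ℕ} (f : Fin (n + 2) → V) :
    Sym2.map f '' (cycleGraph (n + 2)).edgeSet = Set.range fun i => s(f i, f (i + 1)) := by
  ext e
  constructor
  · rintro ⟨e, he, rfl⟩
    induction e using Sym2.ind with
    | _ a b =>
      rcases (cycleGraph_adj.mp he) with h | h <;> dsimp only at h
      · exact ⟨b, by beta_reduce; rw [← h, add_sub_cancel, Sym2.map_mk, Sym2.eq_swap]⟩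
      · exact ⟨a, by beta_reduce; rw [← h, add_sub_cancel, Sym2.map_mk]⟩
  · rintro ⟨i, rfl⟩
    exact ⟨s(i, i + 1), cycleGraph_adj.mpr (Or.inr (add_sub_cancel_left i 1)), rfl⟩

theorem cycleGraph.edges_cycle (n : ℕ) :
    {e | e ∈ (cycleGraph.cycle n).edges} = (cycleGraph (n + 3)).edgeSet := by
  refine subset_antisymm (fun e he => Walk.edges_subset_edgeSet _ he) ?_
  have hrange : (cycleGraph (n + 3)).edgeSet = Set.range fun i => s(i, i + 1) := by
    simpa using image_edgeSet_cycleGraph (n := n + 1) id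
  rw [hrange]
  rintro _ ⟨i, rfl⟩
  rw [Set.mem_ofPred_eq, Walk.mk_mem_edges_iff_exists]
  -- the cycle runs through `Fin (n + 3)` downwards
  refine ⟨n + 2 - i, by simp; omega, ?_⟩
  rw [cycleGraph.getVert_cycle (by omega), cycleGraph.getVert_cycle (by omega), Sym2.eq_swap]
  congr 1 <;> ext
  · simp only [show n + 3 - (n + 2 - (i : ℕ) + 1) = i by omega, Nat.mod_eq_of_lt i.isLt]
  · simp only [show n + 3 - (n + 2 - (i : ℕ)) = i + 1 by omega, Fin.val_add, Fin.val_one]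

theorem hasCycleDecomp_cycleGraph (n : ℕ) : HasCycleDecomp (cycleGraph (n + 3)) {n + 3} :=
  ⟨{(cycleGraph (n + 3)).edgeSet},
    by simpa using ⟨0, cycleGraph.cycle n, cycleGraph.isCycle_cycle, cycleGraph.length_cycle,
      (cycleGraph.edges_cycle n).symm⟩,
    Set.sUnion_singleton _, Set.pairwiseDisjoint_singleton _ _⟩

theorem hasCycleDecomp_of_existsUnique {ι : Type*} {n : ℕ}
    (φ : ι → Copy (cycleGraph (n + 3)) G)
    (h : ∀ u v, G.Adj u v → ∃! κ, ∃ i,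
      (φ κ i = u ∧ φ κ (i + 1) = v) ∨ (φ κ i = v ∧ φ κ (i + 1) = u)) :
    HasCycleDecomp G {n + 3} := by
  have hrange (κ) := image_edgeSet_cycleGraph (n := n + 1) (φ κ)
  have hedgeSet : G.edgeSet = ⋃ κ, Sym2.map (φ κ) '' (cycleGraph (n + 3)).edgeSet := by
    refine subset_antisymm (fun e he => ?_)
      (Set.iUnion_subset fun κ => (φ κ).toHom.image_edgeSet_subset)
    induction e using Sym2.ind with
    | _ u v =>
      obtain ⟨κ, ⟨i, hi⟩, -⟩ := h u v he
      refine Set.mem_iUnion.mpr ⟨κ, hrange κ ▸ ⟨i, ?_⟩⟩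
      rcases hi with ⟨rfl, rfl⟩ | ⟨rfl, rfl⟩
      exacts [rfl, Sym2.eq_swap]
  rw [hasCycleDecomp_iff, hedgeSet]
  refine HasCycleDecompOn.iUnion (fun κ κ' hne => ?_)
    fun κ => HasCycleDecompOn.map (hasCycleDecomp_cycleGraph n) (φ κ)
  rw [Function.onFun, hrange, hrange, Set.disjoint_left]
  rintro _ ⟨i, rfl⟩ ⟨j, hj⟩
  have hadj : G.Adj (φ κ i) (φ κ (i + 1)) := (φ κ).toHom.map_adj (cycleGraph_adj.mpr (by simp))
  refine hne ((h _ _ hadj).unique ⟨i, Or.inl ⟨rfl, rfl⟩⟩ ⟨j, ?_⟩)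
  rcases Sym2.eq_iff.mp hj with ⟨h1, h2⟩ | ⟨h1, h2⟩
  exacts [Or.inl ⟨h1, h2⟩, Or.inr ⟨h1, h2⟩]

theorem Walk.getVert_mod_length {u : V} (p : G.Walk u u) {k : ℕ} (hk : k ≤ p.length) :
    p.getVert (k % p.length) = p.getVert k := by
  rcases hk.lt_or_eq with hk | rfl
  · rw [Nat.mod_eq_of_lt hk]
  · rw [Nat.mod_self, Walk.getVert_zero, Walk.getVert_length]

theorem Walk.IsCycle.exists_copy_cycleGraph {u : V} {p : G.Walk u u} (hp : p.IsCycle) :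
    ∃ φ : Copy (cycleGraph p.length) G,
      Sym2.map φ '' (cycleGraph p.length).edgeSet = {e | e ∈ p.edges} := by
  obtain ⟨n, hn⟩ : ∃ n, p.length = n + 2 := ⟨p.length - 2, by have := hp.three_le_length; omega⟩
  rw [hn]
  have hsucc (i : Fin (n + 2)) : p.getVert ↑(i + 1) = p.getVert (↑i + 1) := by
    have := p.getVert_mod_length (k := i + 1) (by omega)
    rwa [hn, ← Fin.val_one, ← Fin.val_add] at this
  have hadj (i : Fin (n + 2)) : G.Adj (p.getVert i) (p.getVert ↑(i + 1)) :=
    hsucc i ▸ p.adj_getVert_succ (by omega)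
  let φ : Copy (cycleGraph (n + 2)) G :=
    { toHom := ⟨fun i => p.getVert i, fun {a b} h => by
        rcases cycleGraph_adj.mp h with h | h <;> rw [sub_eq_iff_eq_add'] at h <;> subst h
        exacts [(hadj b).symm, hadj a]⟩
      injective' := fun a b h => Fin.ext (hp.getVert_injOn' (by simp; omega) (by simp; omega) h) }
  refine ⟨φ, ?_⟩
  rw [image_edgeSet_cycleGraph]
  ext e
  simp only [Set.mem_range, Set.mem_ofPred_eq, List.mem_iff_getElem, Walk.getElem_edges,
    Walk.length_edges]
  constructor
  · rintro ⟨i, rfl⟩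
    exact ⟨i, by omega, (hsucc i).symm ▸ rfl⟩
  · rintro ⟨i, hi, rfl⟩
    exact ⟨⟨i, by omega⟩, congrArg _ (hsucc ⟨i, by omega⟩)⟩

def blowUp (G : SimpleGraph V) (α : Type*) : SimpleGraph (V × α) := G.comap Prod.fst

instance [DecidableRel G.Adj] : DecidableRel (G.blowUp α).Adj :=
  fun x y => inferInstanceAs (Decidable (G.Adj x.1 y.1))

theorem edgeSet_blowUp : (G.blowUp α).edgeSet = Sym2.map Prod.fst ⁻¹' G.edgeSet := by
  ext e
  induction e using Sym2.ind
  rfl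

theorem image_edgeSet_blowUp (f : V → W) :
    Sym2.map (Prod.map f id) '' (G.blowUp α).edgeSet =
      Sym2.map Prod.fst ⁻¹' (Sym2.map f '' G.edgeSet) := by
  ext e
  constructor
  · rintro ⟨e, he, rfl⟩
    refine ⟨Sym2.map Prod.fst e, by rwa [edgeSet_blowUp] at he, ?_⟩
    simp only [Sym2.map_map]
    rfl
  · induction e using Sym2.ind with
    | _ x y =>
      rintro ⟨e, he, hxy⟩
      induction e using Sym2.ind with
      | _ a b =>
        rcases Sym2.eq_iff.mp hxy with ⟨ha, hb⟩ | ⟨ha, hb⟩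
        · exact ⟨s((a, x.2), (b, y.2)), he, by simp [ha, hb]⟩
        · exact ⟨s((b, x.2), (a, y.2)), he.symm, by simp [ha, hb]⟩

def Copy.blowUp (φ : Copy G H) (α : Type*) : Copy (G.blowUp α) (H.blowUp α) :=
  ⟨⟨Prod.map φ _root_.id, fun h => φ.toHom.map_adj h⟩, φ.injective.prodMap injective_id⟩

theorem Walk.IsCycle.hasCycleDecompOn_preimage_blowUp {u : V} {p : G.Walk u u}
    (hp : p.IsCycle) (hC : HasCycleDecomp ((cycleGraph p.length).blowUp α) L) :
    (G.blowUp α).HasCycleDecompOn L (Sym2.map Prod.fst ⁻¹' {e | e ∈ p.edges}) := by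
  obtain ⟨φ, hφ⟩ := hp.exists_copy_cycleGraph
  rw [← hφ, ← image_edgeSet_blowUp]
  exact HasCycleDecompOn.map hC (φ.blowUp α)

theorem _root_.HasCycleDecomp.blowUp {L' : Set ℕ} (h : HasCycleDecomp G L)
    (hL : ∀ n ∈ L, HasCycleDecomp ((cycleGraph n).blowUp α) L') :
    HasCycleDecomp (G.blowUp α) L' := by
  obtain ⟨D, hcyc, hunion, hdisj⟩ := h
  rw [hasCycleDecomp_iff, edgeSet_blowUp, ← hunion, Set.sUnion_eq_iUnion, Set.preimage_iUnion]
  refine HasCycleDecompOn.iUnion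
    (fun C C' hne => (hdisj C.2 C'.2 (Subtype.coe_ne_coe.mpr hne)).preimage _) fun C => ?_
  obtain ⟨v, p, hp, hlen, hC⟩ := hcyc C C.2
  rw [hC]
  exact hp.hasCycleDecompOn_preimage_blowUp (hL _ hlen)

/- An edge from `(j, x)` to `(j + 1, y)` has shift `y - x`. The base cycle
`p ↦ (trianglePart p, triangleShift p)` uses the shifts `0, 1, 2` for `j = 0`, `4` for `j = 1`
and `3` for `j = 2`; translating by `c : Fin 3` permutes the `j`, so the translates by
`Fin 3 × Fin 5` cover each edge of the blow-up exactly once. -/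
def trianglePart : Fin 5 → Fin 3 := ![0, 1, 0, 1, 2]
def triangleShift : Fin 5 → Fin 5 := ![0, 1, 1, 3, 2]

theorem adj_add_trianglePart : ∀ (c : Fin 3) {p q : Fin 5}, (cycleGraph 5).Adj p q →
    (cycleGraph 3).Adj (c + trianglePart p) (c + trianglePart q) := by
  decide

theorem eq_of_trianglePart_eq_of_triangleShift_eq : ∀ {p q : Fin 5},
    trianglePart p = trianglePart q → triangleShift p = triangleShift q → p = q := by
  decide

def triangleBlowUpCycle (c : Fin 3) (d : Fin 5) :
    Copy (cycleGraph 5) ((cycleGraph 3).blowUp (Fin 5)) where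
  toHom := ⟨fun p => (c + trianglePart p, d + triangleShift p), adj_add_trianglePart c⟩
  injective' _ _ h := eq_of_trianglePart_eq_of_triangleShift_eq
    (add_left_cancel (congrArg Prod.fst h)) (add_left_cancel (congrArg Prod.snd h))

theorem hasCycleDecomp_blowUp_cycleGraph_three :
    HasCycleDecomp ((cycleGraph 3).blowUp (Fin 5)) {5} :=
  hasCycleDecomp_of_existsUnique (fun κ : Fin 3 × Fin 5 => triangleBlowUpCycle κ.1 κ.2)
    (by unfold ExistsUnique; decide)

def pentagonBlowUpCycle (a b : Fin 5) : Copy (cycleGraph 5) ((cycleGraph 5).blowUp (Fin 5)) :=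
  ⟨⟨fun p => (p, a + b * p), id⟩, fun _ _ h => congrArg Prod.fst h⟩

@[simp]
theorem pentagonBlowUpCycle_apply (a b p : Fin 5) :
    pentagonBlowUpCycle a b p = (p, a + b * p) :=
  rfl

open Fin.CommRing in
theorem existsUnique_pentagonBlowUpCycle (i x y : Fin 5) :
    ∃! κ : Fin 5 × Fin 5, ∃ p,
      (pentagonBlowUpCycle κ.1 κ.2 p = (i, x) ∧
        pentagonBlowUpCycle κ.1 κ.2 (p + 1) = (i + 1, y)) ∨
      (pentagonBlowUpCycle κ.1 κ.2 p = (i + 1, y) ∧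
        pentagonBlowUpCycle κ.1 κ.2 (p + 1) = (i, x)) := by
  simp only [pentagonBlowUpCycle_apply, Prod.mk.injEq]
  refine ⟨(x - (y - x) * i, y - x), ⟨i, Or.inl ⟨⟨rfl, by ring⟩, rfl, by ring⟩⟩, ?_⟩
  rintro ⟨a, b⟩ ⟨p, ⟨⟨rfl, hx⟩, -, hy⟩ | ⟨⟨rfl, -⟩, hp, -⟩⟩
  · dsimp only at hx hy
    have hb : b = y - x := by rw [← hx, ← hy]; ring
    exact Prod.ext (by rw [← hb, ← hx]; ring) hb
  · exact absurd hp (by revert i; decide)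

theorem hasCycleDecomp_blowUp_cycleGraph_five :
    HasCycleDecomp ((cycleGraph 5).blowUp (Fin 5)) {5} := by
  refine hasCycleDecomp_of_existsUnique (fun κ : Fin 5 × Fin 5 => pentagonBlowUpCycle κ.1 κ.2) ?_
  rintro ⟨i, x⟩ ⟨j, y⟩ hadj
  rcases cycleGraph_adj.mp hadj with h | h <;> rw [sub_eq_iff_eq_add'] at h <;> subst h
  · simpa only [or_comm] using existsUnique_pentagonBlowUpCycle j y x
  · exact existsUnique_pentagonBlowUpCycle i x y

def completeMultipartiteGraph.isoBlowUp {ι β : Type*} {V W : ι → Type*}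
    (e : ∀ i, W i ≃ V i × β) :
    completeMultipartiteGraph W ≃g (completeMultipartiteGraph V).blowUp β where
  toEquiv := (Equiv.sigmaCongrRight e).trans (Equiv.sigmaProdDistrib V β).symm
  map_rel_iff' := Iff.rfl

end SimpleGraph

theorem stmt_7_general (r s t : ℕ)
    (h : HasCycleDecomp (completeTripartiteGraph r s t) {3, 5}) :
    HasCycleDecomp (completeTripartiteGraph (5 * r) (5 * s) (5 * t)) {5} := by
  have hsize (i : Fin 3) : ![5 * r, 5 * s, 5 * t] i = ![r, s, t] i * 5 := by
    fin_cases i <;> simp [mul_comm]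
  have hblowUp := h.blowUp (α := Fin 5) (by
    rintro n (rfl | rfl)
    exacts [hasCycleDecomp_blowUp_cycleGraph_three, hasCycleDecomp_blowUp_cycleGraph_five])
  exact hblowUp.of_iso (completeMultipartiteGraph.isoBlowUp
    fun i => (finCongr (hsize i)).trans finProdFinEquiv.symm).symm

theorem stmt_7 (r s t : ℕ) (hr : 0 < r) (hs : 0 < s) (ht : 0 < t)
    (h : HasCycleDecomp (completeTripartiteGraph r s t) {3, 5}) :
    HasCycleDecomp (completeTripartiteGraph (5 * r) (5 * s) (5 * t)) {5} :=
  stmt_7_general r s t h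
end

section
/- Let r and s be odd integers with 18 ≤ r < s. Then: (a) there is no positive integer y such that y(r − 3) < s and y(r − 3) ≡ s − r − 1 (mod s); and (b) there is no positive integer y such that y(r − 3) < s and y(r − 3) ≡ r + 1 (mod s). -/
/-!
Both residues s − r − 1 and r + 1 lie in [0, s), and so does y(r − 3), so each congruence is an
equality of integers. In (a) it equates the even number y(r − 3) with the odd number s − r − 1;
in (b) it says y(r − 3) = r + 1, which fails for y = 1 and is too large for y ≥ 2 once r ≥ 8.
-/

theorem Int.ModEq.eq_of_mem_Ico {n a b : ℤ} (h : a ≡ b [ZMOD n]) (ha₀ : 0 ≤ a) (ha : a < n)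
    (hb₀ : 0 ≤ b) (hb : b < n) : a = b := by
  rwa [Int.ModEq, Int.emod_eq_of_lt ha₀ ha, Int.emod_eq_of_lt hb₀ hb] at h

theorem not_mul_sub_three_modEq_sub_sub_one {r s y : ℤ} (hor : Odd r) (hos : Odd s)
    (hr : 3 ≤ r) (hrs : r < s) (hy : 0 < y) (hys : y * (r - 3) < s) :
    ¬ y * (r - 3) ≡ s - r - 1 [ZMOD s] := by
  intro h
  have heq := h.eq_of_mem_Ico (by nlinarith) hys (by omega) (by omega)
  have heven : Even (y * (r - 3)) := (hor.sub_odd (by decide)).mul_left y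
  have hodd : Odd (s - r - 1) := (hos.sub_odd hor).sub_odd odd_one
  exact Int.not_even_iff_odd.mpr hodd (heq ▸ heven)

theorem mul_sub_three_ne_add_one {r y : ℤ} (hr : 8 ≤ r) (hy : 0 < y) : y * (r - 3) ≠ r + 1 := by
  intro h
  obtain rfl | hy₂ : y = 1 ∨ 2 ≤ y := by omega
  · linarith
  · nlinarith

theorem not_mul_sub_three_modEq_add_one {r s y : ℤ} (hr : 8 ≤ r) (hrs : r + 1 < s) (hy : 0 < y)
    (hys : y * (r - 3) < s) : ¬ y * (r - 3) ≡ r + 1 [ZMOD s] := fun h =>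
  mul_sub_three_ne_add_one hr hy (h.eq_of_mem_Ico (by nlinarith) hys (by omega) hrs)

theorem stmt_12 (r s : ℤ) (hor : Odd r) (hos : Odd s) (hr : 18 ≤ r) (hrs : r < s) :
    (¬ ∃ y : ℤ, 0 < y ∧ y * (r - 3) < s ∧ y * (r - 3) ≡ s - r - 1 [ZMOD s]) ∧
    (¬ ∃ y : ℤ, 0 < y ∧ y * (r - 3) < s ∧ y * (r - 3) ≡ r + 1 [ZMOD s]) := by
  have hrs' : r + 1 < s := by
    obtain ⟨a, rfl⟩ := hor
    obtain ⟨b, rfl⟩ := hos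
    omega
  constructor
  · rintro ⟨y, hy, hys, h⟩
    exact not_mul_sub_three_modEq_sub_sub_one hor hos (by omega) hrs hy hys h
  · rintro ⟨y, hy, hys, h⟩
    exact not_mul_sub_three_modEq_add_one (by omega) hrs' hy hys h
end
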